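/- arXiv:2604.24556 — 2 statements merged into one kernel-verified Lean document; each statement's English description precedes it below -/
import Mathlib

section
/- Let φ: G → G be an endomorphism of a torsion abelian group G and H ≤ G a φ-invariant subgroup (φ(H) ⊆ H). If the restriction φ|_H: H → H and the induced endomorphism φ̃: G/H → G/H are both positively expansive, then φ is positively expansive. -/
/-!
Lift the two generators: `S = S_H + ⟨lifts of S_Q⟩` is finite because `G` is torsion. Given a
finite `F ≤ G`, the image of `F` in `G ⧸ H` lies in `∑_{k ≤ n} φ̃^k(S_Q)`, hence `F ≤ W + H` with
`W = ∑_{k ≤ n} φ^k(S)` finite. The finite subgroup `(F + W) ∩ H` lies in `∑_{k ≤ m} φ_H^k(S_H)`,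
so `F ≤ ∑_{k ≤ max n m} φ^k(S)`.
-/

/-- `S` is a positive generator for `φ`. -/
def IsPositiveGenerator {G : Type*} [AddCommGroup G] (φ : AddMonoid.End G)
    (S : AddSubgroup G) : Prop :=
  ∀ F : AddSubgroup G, (F : Set G).Finite →
    ∃ n : ℕ, F ≤ ⨆ k ∈ Finset.range (n + 1), S.map (φ ^ k)

/-- `φ` is positively expansive: it has a finite positive generator. -/
def PositivelyExpansive {G : Type*} [AddCommGroup G] (φ : AddMonoid.End G) : Prop :=
  ∃ S : AddSubgroup G, (S : Set G).Finite ∧ IsPositiveGenerator φ S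

open AddSubgroup

section

variable {G G' : Type*} [AddCommGroup G] [AddCommGroup G']

theorem AddSubgroup.finite_sup {K L : AddSubgroup G} (hK : (K : Set G).Finite)
    (hL : (L : Set G).Finite) : ((K ⊔ L : AddSubgroup G) : Set G).Finite := by
  rw [add_normal]
  exact hK.add hL

theorem AddSubgroup.finite_biSup {ι : Type*} (s : Finset ι) {K : ι → AddSubgroup G}
    (hK : ∀ i ∈ s, (K i : Set G).Finite) :
    ((⨆ i ∈ s, K i : AddSubgroup G) : Set G).Finite := by
  classical
  induction s using Finset.induction_on with
  | empty => simp
  | insert a s _ ih =>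
    rw [Finset.iSup_insert]
    exact finite_sup (hK a (by simp)) (ih fun i hi => hK i (by simp [hi]))

theorem AddSubgroup.finite_closure_of_isAddTorsion (hG : IsAddTorsion G) {A : Set G}
    (hA : A.Finite) : ((closure A : AddSubgroup G) : Set G).Finite := by
  have : AddGroup.FG (closure A) := (AddGroup.fg_iff_addSubgroup_fg _).2 ⟨hA.toFinset, by simp⟩
  have : Finite (closure A) := AddCommGroup.finite_of_fg_isAddTorsion _ (hG.addSubgroup _)
  exact Set.toFinite _

def orbitSpan (φ : AddMonoid.End G) (S : AddSubgroup G) (n : ℕ) : AddSubgroup G :=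
  ⨆ k ∈ Finset.range (n + 1), S.map (φ ^ k)

variable {φ : AddMonoid.End G} {S S' : AddSubgroup G} {n m : ℕ}

theorem orbitSpan_mono (hS : S ≤ S') (hnm : n ≤ m) : orbitSpan φ S n ≤ orbitSpan φ S' m :=
  iSup₂_le fun k hk => (map_mono hS).trans <|
    le_iSup₂_of_le (f := fun k _ => S'.map (φ ^ k)) k
      (by simp only [Finset.mem_range] at hk ⊢; omega) le_rfl

theorem finite_orbitSpan (hS : (S : Set G).Finite) : (orbitSpan φ S n : Set G).Finite :=
  finite_biSup _ fun k _ => hS.image (φ ^ k)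

theorem map_orbitSpan (f : G →+ G') {ψ : AddMonoid.End G'} (h : ∀ g, f (φ g) = ψ (f g)) :
    (orbitSpan φ S n).map f = orbitSpan ψ (S.map f) n := by
  have hpow : ∀ k, f.comp (φ ^ k) = (ψ ^ k).comp f := fun k => AddMonoidHom.ext
    (Function.Semiconj.iterate_right (f := f) h k)
  simp only [orbitSpan, AddSubgroup.map_iSup]
  refine iSup_congr fun k => iSup_congr fun _ => ?_
  exact (map_map _ _ _).trans ((congrArg (map · S) (hpow k)).trans (map_map _ _ _).symm)

end

theorem IsPositiveGenerator.of_addSubgroup_of_quotient {G : Type*} [AddCommGroup G]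
    {H : AddSubgroup G} {φ : AddMonoid.End G} {φH : AddMonoid.End H} {φQ : AddMonoid.End (G ⧸ H)}
    (hφH : ∀ x : H, (φH x : G) = φ x)
    (hφQ : ∀ g : G, φQ (QuotientAddGroup.mk g) = QuotientAddGroup.mk (φ g))
    {SH : AddSubgroup H} {SQ : AddSubgroup (G ⧸ H)} {S : AddSubgroup G}
    (hSH : IsPositiveGenerator φH SH) (hSQ : IsPositiveGenerator φQ SQ)
    (hS : (S : Set G).Finite) (hSH_le : SH.map H.subtype ≤ S)
    (hSQ_le : SQ ≤ S.map (QuotientAddGroup.mk' H)) :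
    IsPositiveGenerator φ S := by
  intro F hF
  obtain ⟨n, hn⟩ := hSQ (F.map (QuotientAddGroup.mk' H)) (hF.image _)
  set W := orbitSpan φ S n
  have hFW : F ≤ W ⊔ H := by
    rw [← QuotientAddGroup.ker_mk' H, ← comap_map_eq, ← map_le_iff_le_comap]
    calc F.map (QuotientAddGroup.mk' H) ≤ orbitSpan φQ SQ n := hn
      _ ≤ orbitSpan φQ (S.map (QuotientAddGroup.mk' H)) n := orbitSpan_mono hSQ_le le_rfl
      _ = W.map (QuotientAddGroup.mk' H) := (map_orbitSpan _ fun g => (hφQ g).symm).symm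
  have hFWH_fin : ((F ⊔ W).addSubgroupOf H : Set H).Finite := by
    rw [coe_addSubgroupOf]
    exact (finite_sup hF (finite_orbitSpan hS)).preimage H.subtype_injective.injOn
  obtain ⟨m, hm⟩ := hSH _ hFWH_fin
  have hFWH : (F ⊔ W) ⊓ H ≤ orbitSpan φ S m :=
    calc (F ⊔ W) ⊓ H = ((F ⊔ W).addSubgroupOf H).map H.subtype :=
          (addSubgroupOf_map_subtype _ _).symm
      _ ≤ (orbitSpan φH SH m).map H.subtype := map_mono hm
      _ = orbitSpan φ (SH.map H.subtype) m := map_orbitSpan _ hφH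
      _ ≤ orbitSpan φ S m := orbitSpan_mono hSH_le le_rfl
  refine ⟨max n m, fun f hf => ?_⟩
  obtain ⟨w, hw, h, hh, rfl⟩ := mem_sup.1 (hFW hf)
  have hh_mem : h ∈ (F ⊔ W) ⊓ H :=
    ⟨by simpa using sub_mem (mem_sup_left hf) (mem_sup_right hw), hh⟩
  exact add_mem (orbitSpan_mono le_rfl (le_max_left n m) hw)
    (orbitSpan_mono le_rfl (le_max_right n m) (hFWH hh_mem))

theorem stmt10 {G : Type*} [AddCommGroup G] (hG : AddMonoid.IsTorsion G)
    (H : AddSubgroup G) (φ : AddMonoid.End G)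
    (φH : AddMonoid.End H) (φQ : AddMonoid.End (G ⧸ H))
    (hφH : ∀ x : H, (φH x : G) = φ (x : G))
    (hφQ : ∀ g : G, φQ (QuotientAddGroup.mk g) = QuotientAddGroup.mk (φ g))
    (hH : PositivelyExpansive φH) (hQ : PositivelyExpansive φQ) :
    PositivelyExpansive φ := by
  obtain ⟨SH, hSH_fin, hSH⟩ := hH
  obtain ⟨SQ, hSQ_fin, hSQ⟩ := hQ
  let S := SH.map H.subtype ⊔ closure (Quotient.out '' (SQ : Set (G ⧸ H)))
  have hS_fin : (S : Set G).Finite :=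
    finite_sup (hSH_fin.image _) (finite_closure_of_isAddTorsion hG (hSQ_fin.image _))
  have hSQ_le : SQ ≤ S.map (QuotientAddGroup.mk' H) := fun q hq =>
    ⟨q.out, mem_sup_right (subset_closure ⟨q, hq, rfl⟩), Quotient.out_eq q⟩
  exact ⟨S, hS_fin, hSH.of_addSubgroup_of_quotient hφH hφQ hSQ hS_fin le_sup_left hSQ_le⟩
end

section
/- If a torsion abelian group G admits a positively expansive surjective endomorphism, then G is finite. -/
/-!
Let `T n = S + φ S + ⋯ + φⁿ S` (`orbitSum φ S n`). Each `T n` is finitely generated, hence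
finite because `G` is torsion. As `φ` is surjective, preimages of the elements of `S` all lie in some `T m`, so
`S ⊆ φ (T m)` and hence `T m ⊆ φ (T m)`. A finite set cannot be smaller than its image, so
`φ (T m) = T m`; then `T m` contains every `φᵏ S`, hence every finite subgroup of `G`, and
`G = T m` is finite.
-/

section

variable {G : Type*} [AddCommGroup G]

theorem AddSubgroup.FG.finite_of_isAddTorsion (hG : IsAddTorsion G) {H : AddSubgroup G}
    (hH : H.FG) : (H : Set G).Finite :=
  have : AddGroup.FG H := (AddGroup.fg_iff_addSubgroup_fg H).2 hH
  Set.finite_coe_iff.mp (AddCommGroup.finite_of_fg_isAddTorsion H (hG.addSubgroup H))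

theorem AddSubgroup.fg_of_finite {H : AddSubgroup G} (hH : (H : Set G).Finite) : H.FG :=
  (AddSubgroup.fg_iff H).2 ⟨H, H.closure_eq, hH⟩

theorem AddSubgroup.map_eq_self_of_le_map {H : AddSubgroup G} (hH : (H : Set G).Finite)
    (f : G →+ G) (h : H ≤ H.map f) : H.map f = H :=
  (SetLike.coe_injective (Set.eq_of_subset_of_ncard_le h (Set.ncard_image_le hH) (hH.image f))).symm

theorem AddSubgroup.map_pow_zero (S : AddSubgroup G) (φ : AddMonoid.End G) :
    S.map (φ ^ 0) = S :=
  (congrArg (fun f : AddMonoid.End G => S.map f) (pow_zero φ)).trans S.map_id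

theorem AddSubgroup.map_pow_succ (S : AddSubgroup G) (φ : AddMonoid.End G) (k : ℕ) :
    S.map (φ ^ (k + 1)) = (S.map (φ ^ k)).map φ :=
  (congrArg (fun f : AddMonoid.End G => S.map f) (pow_succ' φ k)).trans
    (S.map_map φ (φ ^ k)).symm

def orbitSum (φ : AddMonoid.End G) (S : AddSubgroup G) (n : ℕ) : AddSubgroup G :=
  ⨆ k ∈ Finset.range (n + 1), S.map (φ ^ k)

section orbitSum

variable (φ : AddMonoid.End G) {S : AddSubgroup G}

theorem map_le_orbitSum {k n : ℕ} (hk : k ≤ n) : S.map (φ ^ k) ≤ orbitSum φ S n :=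
  le_biSup (fun k => S.map (φ ^ k)) (Finset.mem_range_succ_iff.2 hk)

theorem le_orbitSum (n : ℕ) : S ≤ orbitSum φ S n :=
  (S.map_pow_zero φ).ge.trans (map_le_orbitSum φ (Nat.zero_le n))

theorem orbitSum_fg (hS : (S : Set G).Finite) (n : ℕ) : (orbitSum φ S n).FG :=
  AddSubgroup.FG.biSup_finset _ _ fun _ _ => AddSubgroup.fg_of_finite (hS.image _)

theorem orbitSum_le_of_map_le {H : AddSubgroup G} (hS : S ≤ H) (hH : H.map φ ≤ H) (n : ℕ) :
    orbitSum φ S n ≤ H := by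
  have hpow (k : ℕ) : S.map (φ ^ k) ≤ H := by
    induction k with
    | zero => exact (S.map_pow_zero φ).le.trans hS
    | succ k ih => exact (S.map_pow_succ φ k).le.trans ((AddSubgroup.map_mono ih).trans hH)
  exact iSup₂_le fun k _ => hpow k

theorem orbitSum_le_map_orbitSum {n : ℕ} (h : S ≤ (orbitSum φ S n).map φ) :
    orbitSum φ S n ≤ (orbitSum φ S n).map φ := by
  refine iSup₂_le fun k hk => ?_
  cases k with
  | zero => exact (S.map_pow_zero φ).le.trans h
  | succ k =>
    refine (S.map_pow_succ φ k).le.trans (AddSubgroup.map_mono (map_le_orbitSum φ ?_))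
    exact (Nat.succ_lt_succ_iff.1 (Finset.mem_range.1 hk)).le

end orbitSum

theorem IsPositiveGenerator.exists_le_map_orbitSum (hG : IsAddTorsion G)
    {φ : AddMonoid.End G} (hsurj : Function.Surjective φ) {S : AddSubgroup G}
    (hS : (S : Set G).Finite) (hgen : IsPositiveGenerator φ S) :
    ∃ n, S ≤ (orbitSum φ S n).map φ := by
  choose t ht using hsurj
  obtain ⟨n, hn⟩ := hgen (AddSubgroup.closure (t '' S))
    ((AddSubgroup.fg_iff _).2 ⟨_, rfl, hS.image t⟩ |>.finite_of_isAddTorsion hG)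
  exact ⟨n, fun s hs => ⟨t s, hn (AddSubgroup.subset_closure ⟨s, hs, rfl⟩), ht s⟩⟩

end

theorem stmt17 {G : Type*} [AddCommGroup G] (hG : AddMonoid.IsTorsion G)
    (φ : AddMonoid.End G) (hsurj : Function.Surjective φ)
    (hexp : PositivelyExpansive φ) :
    Finite G := by
  obtain ⟨S, hS, hgen⟩ := hexp
  obtain ⟨m, hm⟩ := hgen.exists_le_map_orbitSum hG hsurj hS
  set H := orbitSum φ S m
  have hHfin : (H : Set G).Finite := (orbitSum_fg φ hS m).finite_of_isAddTorsion hG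
  have hinv : H.map φ ≤ H :=
    (AddSubgroup.map_eq_self_of_le_map hHfin φ (orbitSum_le_map_orbitSum φ hm)).le
  have hmem (g : G) : g ∈ H := by
    obtain ⟨n, hn⟩ := hgen (AddSubgroup.zmultiples g)
      ((AddSubgroup.fg_iff _).2 ⟨{g}, (AddSubgroup.zmultiples_eq_closure g).symm,
        Set.finite_singleton g⟩ |>.finite_of_isAddTorsion hG)
    exact orbitSum_le_of_map_le φ (le_orbitSum φ m) hinv n (hn (AddSubgroup.mem_zmultiples g))
  exact Set.finite_univ_iff.mp (hHfin.subset fun g _ => hmem g)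
end
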